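/- Let K ⊆ L ⊆ Σ* be regular languages over a finite alphabet Σ (each accepted by a DFA with finite state set), with subalphabets Σ_1,…,Σ_n ⊆ Σ and projections P_i. If the OCT condition holds, then finite-state decentralized observers exist: for each i ∈ {1,…,n} there exist a finite type Q_i, an initial state q_i^0 ∈ Q_i, a transition function δ_i : Q_i → Σ → Q_i, and a labeling ℓ_i : Q_i → {Y,N,U}, such that the functions f_i : Σ* → {Y,N,U} defined by f_i(σ) = ℓ_i applied to the state reached from q_i^0 by reading σ (i.e., ℓ_i(List.foldl δ_i q_i^0 σ)) satisfy the ALTOCT requirements: (for all ρ ∈ L there exists i with (ρ ∈ K → f_i(P_i(ρ)) = Y) and (ρ ∈ L \ K → f_i(P_i(ρ)) = N)) and (for all ρ ∈ L and all i, (f_i(P_i(ρ)) = Y → ρ ∈ K) and (f_i(P_i(ρ)) = N → ρ ∈ L \ K)). -/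

import Mathlib

/-- The three possible observer outputs: Yes, No, Unknown. -/
inductive Obs : Type
  | Y
  | N
  | U
deriving DecidableEq

/-- Projection onto subalphabet `Sub i`: keep only the letters lying in `Sub i`. -/
def P {α : Type*} {n : ℕ} (Sub : Fin n → Set α) [∀ i, DecidablePred (· ∈ Sub i)]
    (i : Fin n) (ρ : List α) : List α :=
  ρ.filter (fun x => decide (x ∈ Sub i))

/-- Agent `i` can tell whether `ρ` is good or bad. -/
def cantell {α : Type*} {n : ℕ} (Sub : Fin n → Set α) [∀ i, DecidablePred (· ∈ Sub i)]
    (K L : Set (List α)) (i : Fin n) (ρ : List α) : Prop :=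
  (ρ ∈ K → ¬ ∃ ρ' ∈ L \ K, P Sub i ρ = P Sub i ρ') ∧
  (ρ ∈ L \ K → ¬ ∃ ρ' ∈ K, P Sub i ρ = P Sub i ρ')

/-- The "at least one can tell" (OCT) condition. -/
def OCT {α : Type*} {n : ℕ} (Sub : Fin n → Set α) [∀ i, DecidablePred (· ∈ Sub i)]
    (K L : Set (List α)) : Prop :=
  ∀ ρ ∈ L, ∃ i : Fin n, cantell Sub K L i ρ

/-- The given family of local decision functions satisfies the ALTOCT requirements. -/
def ALTOCTwith {α : Type*} {n : ℕ} (Sub : Fin n → Set α) [∀ i, DecidablePred (· ∈ Sub i)]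
    (K L : Set (List α)) (f : Fin n → List α → Obs) : Prop :=
  (∀ ρ ∈ L, ∃ i : Fin n,
      (ρ ∈ K → f i (P Sub i ρ) = Obs.Y) ∧ (ρ ∈ L \ K → f i (P Sub i ρ) = Obs.N)) ∧
  (∀ ρ ∈ L, ∀ i : Fin n,
      (f i (P Sub i ρ) = Obs.Y → ρ ∈ K) ∧ (f i (P Sub i ρ) = Obs.N → ρ ∈ L \ K))

/-- The alternative OCT (ALTOCT) condition: suitable local decision functions exist. -/
def ALTOCT {α : Type*} {n : ℕ} (Sub : Fin n → Set α) [∀ i, DecidablePred (· ∈ Sub i)]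
    (K L : Set (List α)) : Prop :=
  ∃ f : Fin n → List α → Obs, ALTOCTwith Sub K L f

/-- Splitting a list according to a decomposition of its filtration. -/
lemma filter_split {α : Type*} {p : α → Bool} :
    ∀ {ρ τ : List α} {a : α}, ρ.filter p = τ ++ [a] →
      ∃ u w, ρ = u ++ w ∧ u.filter p = τ ∧ w.filter p = [a] := by
  intro ρ
  induction ρ with
  | nil => intro τ a h; simp at h
  | cons b ρ' ih =>
    intro τ a h
    by_cases hb : p b
    · rw [List.filter_cons_of_pos hb] at h
      cases τ with
      | nil =>
        simp only [List.nil_append, List.cons.injEq] at h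
        exact ⟨[], b :: ρ', by simp, rfl, by
          rw [List.filter_cons_of_pos hb, h.2, h.1]⟩
      | cons c τ' =>
        simp only [List.cons_append, List.cons.injEq] at h
        obtain ⟨u, w, hρ, hu, hw⟩ := ih h.2
        exact ⟨c :: u, w, by rw [hρ, h.1]; rfl,
          by rw [List.filter_cons_of_pos (h.1 ▸ hb), hu], hw⟩
    · rw [List.filter_cons_of_neg (by simpa using hb)] at h
      obtain ⟨u, w, hρ, hu, hw⟩ := ih h
      exact ⟨b :: u, w, by rw [hρ]; rfl,
        by rw [List.filter_cons_of_neg (by simpa using hb), hu], hw⟩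

section Observers

variable {α : Type*} {n : ℕ} (Sub : Fin n → Set α) [∀ i, DecidablePred (· ∈ Sub i)]
    {σK σL : Type*} [Fintype σK] [Fintype σL] (MK : DFA α σK) (ML : DFA α σL)
    (eK : σK ≃ Fin (Fintype.card σK)) (eL : σL ≃ Fin (Fintype.card σL))

/-- The pair of (encoded) states reached by the two DFAs on input `ρ`. -/
def pairOf (ρ : List α) : Fin (Fintype.card σK) × Fin (Fintype.card σL) :=
  (eK (MK.eval ρ), eL (ML.eval ρ))

/-- The set of state pairs reachable by words projecting to `τ`. -/
def obsState (i : Fin n) (τ : List α) :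
    Set (Fin (Fintype.card σK) × Fin (Fintype.card σL)) :=
  { q | ∃ ρ, P Sub i ρ = τ ∧ q = pairOf MK ML eK eL ρ }

/-- The transition function of the observer. -/
def obsStep (i : Fin n)
    (S : Set (Fin (Fintype.card σK) × Fin (Fintype.card σL))) (a : α) :
    Set (Fin (Fintype.card σK) × Fin (Fintype.card σL)) :=
  { q | ∃ q' ∈ S, ∃ w, P Sub i w = [a] ∧
      q = (eK (MK.evalFrom (eK.symm q'.1) w), eL (ML.evalFrom (eL.symm q'.2) w)) }

open Classical in
/-- The labelling of the observer. -/
noncomputable def obsLab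
    (S : Set (Fin (Fintype.card σK) × Fin (Fintype.card σL))) : Obs :=
  if ∀ q ∈ S, eL.symm q.2 ∈ ML.accept → eK.symm q.1 ∈ MK.accept then Obs.Y
  else if ∀ q ∈ S, eL.symm q.2 ∈ ML.accept → eK.symm q.1 ∉ MK.accept then Obs.N
  else Obs.U

lemma obsState_append (i : Fin n) (τ : List α) (a : α) :
    obsState Sub MK ML eK eL i (τ ++ [a]) =
      obsStep Sub MK ML eK eL i (obsState Sub MK ML eK eL i τ) a := by
  ext q
  constructor
  · rintro ⟨ρ, hP, rfl⟩
    obtain ⟨u, w, rfl, hu, hw⟩ := filter_split hP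
    refine ⟨pairOf MK ML eK eL u, ⟨u, hu, rfl⟩, w, hw, ?_⟩
    simp only [pairOf, DFA.eval, DFA.evalFrom_of_append, Equiv.symm_apply_apply]
  · rintro ⟨q', ⟨u, hu, rfl⟩, w, hw, rfl⟩
    refine ⟨u ++ w, ?_, ?_⟩
    · unfold P at *; rw [List.filter_append, hu, hw]
    · simp only [pairOf, DFA.eval, DFA.evalFrom_of_append, Equiv.symm_apply_apply]

lemma foldl_obsStep (i : Fin n) (τ : List α) :
    List.foldl (obsStep Sub MK ML eK eL i) (obsState Sub MK ML eK eL i []) τ =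
      obsState Sub MK ML eK eL i τ := by
  induction τ using List.reverseRecOn with
  | nil => rfl
  | append_singleton τ a ih =>
    rw [List.foldl_append, List.foldl_cons, List.foldl_nil, ih, obsState_append]

end Observers

/-- if `K ⊆ L` are regular (accepted by DFAs with finite state sets) and OCT
holds, then finite-state decentralized observers exist: for each `i` there are a finite
state set `Q i`, an initial state, a transition function and a labeling such that the
induced functions `f i σ = lab i (List.foldl (δ i) (init i) σ)` satisfy the ALTOCT
requirements. -/
theorem finite_state_observers_exist {α : Type*} [Fintype α] [DecidableEq α] {n : ℕ}
    (hn : 0 < n)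
    (Sub : Fin n → Set α) [∀ i, DecidablePred (· ∈ Sub i)]
    {σK σL : Type*} [Fintype σK] [Fintype σL]
    (MK : DFA α σK) (ML : DFA α σL)
    (K L : Set (List α))
    (hK : K = MK.accepts) (hL : L = ML.accepts)
    (hKL : K ⊆ L)
    (hOCT : OCT Sub K L) :
    ∃ (Q : Fin n → Type) (_ : ∀ i, Fintype (Q i)) (init : ∀ i, Q i)
      (δ : ∀ i, Q i → α → Q i) (lab : ∀ i, Q i → Obs),
      ALTOCTwith Sub K L (fun i σ => lab i (List.foldl (δ i) (init i) σ)) := by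
  classical
  obtain ⟨eK⟩ : Nonempty (σK ≃ Fin (Fintype.card σK)) := ⟨Fintype.equivFin σK⟩
  obtain ⟨eL⟩ : Nonempty (σL ≃ Fin (Fintype.card σL)) := ⟨Fintype.equivFin σL⟩
  have hmemK : ∀ ρ : List α, ρ ∈ K ↔ eK.symm (pairOf MK ML eK eL ρ).1 ∈ MK.accept := by
    intro ρ
    rw [hK]; change MK.eval ρ ∈ MK.accept ↔ _
    simp [pairOf]
  have hmemL : ∀ ρ : List α, ρ ∈ L ↔ eL.symm (pairOf MK ML eK eL ρ).2 ∈ ML.accept := by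
    intro ρ
    rw [hL]; change ML.eval ρ ∈ ML.accept ↔ _
    simp [pairOf]
  refine ⟨fun _ => Set (Fin (Fintype.card σK) × Fin (Fintype.card σL)),
    fun _ => inferInstance,
    fun i => obsState Sub MK ML eK eL i [],
    fun i => obsStep Sub MK ML eK eL i,
    fun _ => obsLab MK ML eK eL, ?_, ?_⟩
  · -- completeness
    intro ρ hρL
    obtain ⟨i, hct⟩ := hOCT ρ hρL
    refine ⟨i, ?_, ?_⟩
    · intro hρK
      simp only [foldl_obsStep]
      rw [obsLab, if_pos]
      rintro q ⟨ρ', hP, rfl⟩ haccL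
      rw [← hmemK]
      by_contra hρ'K
      exact hct.1 hρK ⟨ρ', ⟨⟨(hmemL ρ').2 haccL, hρ'K⟩, hP.symm⟩⟩
    · intro hρLK
      simp only [foldl_obsStep]
      rw [obsLab, if_neg, if_pos]
      · rintro q ⟨ρ', hP, rfl⟩ haccL hρ'K
        exact hct.2 hρLK ⟨ρ', (hmemK ρ').2 hρ'K, hP.symm⟩
      · intro hY
        exact hρLK.2 ((hmemK ρ).2
          (hY (pairOf MK ML eK eL ρ) ⟨ρ, rfl, rfl⟩ ((hmemL ρ).1 hρLK.1)))
  · -- soundness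
    intro ρ hρL i
    simp only [foldl_obsStep]
    constructor
    · intro hY
      rw [obsLab] at hY
      split_ifs at hY with h1 h2
      exact (hmemK ρ).2 (h1 (pairOf MK ML eK eL ρ) ⟨ρ, rfl, rfl⟩ ((hmemL ρ).1 hρL))
    · intro hN
      rw [obsLab] at hN
      split_ifs at hN with h1 h2
      exact ⟨hρL, fun hρK =>
        h2 (pairOf MK ML eK eL ρ) ⟨ρ, rfl, rfl⟩ ((hmemL ρ).1 hρL) ((hmemK ρ).1 hρK)⟩
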